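/- For every w ∈ Ω and z ∈ Ω, the function f_w(z) = (exp(ℓ(z)) − exp(ℓ(w)))/(exp(ℓ(z)) − exp(conj(ℓ(w)))) satisfies |f_w(z)| < 1 if z ≠ w, and f_w(w) = 0. -/

import Mathlib

/-!
The map `z ↦ (1 + z) / (1 - z)` sends the upper half-disk into the open first quadrant, and
squaring sends the first quadrant into the upper half-plane; since `exp (ℓ z)` is the square of
that quotient, `u = exp (ℓ z)` and `v = exp (ℓ w)` lie in the upper half-plane. There the point
`u` is strictly closer to `v` than to its mirror image `conj v`, so `|f_w(z)| = |u - v| / |u - conj v| < 1`.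
-/

open Complex

/-- The open upper half of the unit disk. -/
def upperHalfDisk : Set ℂ := {z : ℂ | 0 < z.im ∧ ‖z‖ < 1}

/-- `ℓ(z) = Log((1+z)²/(1−z)²)` with the principal branch of the logarithm. -/
noncomputable def ell (z : ℂ) : ℂ := Complex.log ((1 + z) ^ 2 / (1 - z) ^ 2)

/-- The map `f_w(z) = (exp(ℓ(z)) − exp(ℓ(w)))/(exp(ℓ(z)) − exp(conj(ℓ(w))))`. -/
noncomputable def fMap (w z : ℂ) : ℂ :=
  (Complex.exp (ell z) - Complex.exp (ell w)) /
    (Complex.exp (ell z) - Complex.exp ((starRingEnd ℂ) (ell w)))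

open ComplexConjugate

lemma exp_ell {z : ℂ} (h₁ : z ≠ 1) (h₂ : z ≠ -1) : exp (ell z) = ((1 + z) / (1 - z)) ^ 2 := by
  have h₁ : 1 - z ≠ 0 := sub_ne_zero.mpr h₁.symm
  have h₂ : 1 + z ≠ 0 := by rwa [add_comm, ← sub_neg_eq_add, sub_ne_zero]
  rw [ell, exp_log (by positivity), div_pow]

lemma re_one_add_div_one_sub_pos {z : ℂ} (hz : ‖z‖ < 1) : 0 < ((1 + z) / (1 - z)).re := by
  have hz1 : 1 - z ≠ 0 := by
    rintro h
    rw [← sub_eq_zero.mp h, norm_one] at hz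
    exact lt_irrefl 1 hz
  have hnormSq : z.re * z.re + z.im * z.im < 1 := by
    rw [← normSq_apply, normSq_eq_norm_sq]
    nlinarith [norm_nonneg z]
  rw [div_re, ← add_div]
  apply div_pos _ (normSq_pos.mpr hz1)
  simp only [add_re, add_im, sub_re, sub_im, one_re, one_im]
  nlinarith

lemma im_one_add_div_one_sub_pos {z : ℂ} (hz : 0 < z.im) : 0 < ((1 + z) / (1 - z)).im := by
  have hz1 : 1 - z ≠ 0 := fun h ↦ by simp [← sub_eq_zero.mp h] at hz
  rw [div_im, div_sub_div_same]
  apply div_pos _ (normSq_pos.mpr hz1)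
  simp only [add_re, add_im, sub_re, sub_im, one_re, one_im]
  nlinarith

lemma im_sq_pos {u : ℂ} (hre : 0 < u.re) (him : 0 < u.im) : 0 < (u ^ 2).im := by
  rw [sq, mul_im]
  positivity

lemma im_exp_ell_pos {z : ℂ} (hz : z ∈ upperHalfDisk) : 0 < (exp (ell z)).im := by
  obtain ⟨him, hnorm⟩ := hz
  rw [exp_ell (fun h ↦ by simp [h] at him) (fun h ↦ by simp [h] at him)]
  exact im_sq_pos (re_one_add_div_one_sub_pos hnorm) (im_one_add_div_one_sub_pos him)

lemma norm_sub_lt_norm_sub_conj {u v : ℂ} (hu : 0 < u.im) (hv : 0 < v.im) :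
    ‖u - v‖ < ‖u - conj v‖ := by
  rw [norm_def, norm_def]
  apply Real.sqrt_lt_sqrt (normSq_nonneg _)
  simp only [normSq_apply, sub_re, sub_im, conj_re, conj_im]
  nlinarith [mul_pos hu hv]

lemma norm_sub_div_sub_conj_lt_one {u v : ℂ} (hu : 0 < u.im) (hv : 0 < v.im) :
    ‖(u - v) / (u - conj v)‖ < 1 := by
  have hlt := norm_sub_lt_norm_sub_conj hu hv
  rw [norm_div, div_lt_one ((norm_nonneg _).trans_lt hlt)]
  exact hlt

theorem stmt_2 :
    ∀ w ∈ upperHalfDisk, ∀ z ∈ upperHalfDisk,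
      (z ≠ w → ‖fMap w z‖ < 1) ∧ fMap w w = 0 := by
  intro w hw z hz
  refine ⟨fun _ ↦ ?_, by rw [fMap, sub_self, zero_div]⟩
  rw [fMap, exp_conj]
  exact norm_sub_div_sub_conj_lt_one (im_exp_ell_pos hz) (im_exp_ell_pos hw)
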